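/- arXiv:1903.11486 — 2 statements merged into one kernel-verified Lean document; each statement's English description precedes it below -/
import Mathlib

section
/- Let r_g, r_h be positive natural numbers and N ∈ ℕ with N > 10. If the intervals [r_g^N − r_g^{N/10} − r_g, r_g^N + r_g] and [r_h^N − r_h^{N/10} − r_h, r_h^N + r_h] have non-empty intersection, then r_g = r_h. -/
/-!
If `1 ≤ a < b` then `b ^ N - a ^ N ≥ b ^ N - (b - 1) ^ N ≥ b ^ (N - 1)`, and for `b ≥ 2` this gap
already exceeds `b ^ (N / 10) + a + b`. Hence the interval attached to the smaller radius lies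
strictly to the left of the one attached to the larger radius.
-/

lemma pow_add_lt_pow_sub_rpow_sub {a b s : ℝ} {n : ℕ} (ha : 0 ≤ a) (hab : a + 1 ≤ b)
    (hb : 2 ≤ b) (hn : 4 ≤ n) (hs : s ≤ n - 2) :
    a ^ n + a < b ^ n - b ^ s - b := by
  obtain ⟨m, rfl⟩ : ∃ m, n = m + 2 := ⟨n - 2, by omega⟩
  have hrpow : b ^ s ≤ b ^ m := by
    rw [← Real.rpow_natCast]
    exact Real.rpow_le_rpow_of_exponent_le (by linarith) (by push_cast at hs; linarith)
  have hapow : a ^ (m + 2) ≤ (b - 1) * b ^ (m + 1) :=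
    calc a ^ (m + 2) ≤ (b - 1) ^ (m + 2) := pow_le_pow_left₀ ha (by linarith) _
      _ = (b - 1) * (b - 1) ^ (m + 1) := pow_succ' _ _
      _ ≤ (b - 1) * b ^ (m + 1) :=
        mul_le_mul_of_nonneg_left (pow_le_pow_left₀ (by linarith) (by linarith) _) (by linarith)
  have hbm : b ^ 2 ≤ b ^ m := pow_le_pow_right₀ (by linarith) (by omega)
  have hgap : (b - 1) * b ^ 2 > 2 * b - 1 := by nlinarith
  have hsplit : b ^ (m + 2) = (b - 1) * b ^ (m + 1) + (b - 1) * b ^ m + b ^ m := by ring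
  nlinarith

/-- If the intervals `[r_g^N − r_g^{N/10} − r_g, r_g^N + r_g]` and
`[r_h^N − r_h^{N/10} − r_h, r_h^N + r_h]` intersect (with `N > 10`),
then `r_g = r_h`. -/
theorem stmt_5 (rg rh N : ℕ) (hg : 1 ≤ rg) (hh : 1 ≤ rh) (hN : 10 < N)
    (hmeet : ∃ x : ℝ,
      ((rg : ℝ) ^ N - (rg : ℝ) ^ ((N : ℝ) / 10) - rg ≤ x ∧ x ≤ (rg : ℝ) ^ N + rg) ∧
      ((rh : ℝ) ^ N - (rh : ℝ) ^ ((N : ℝ) / 10) - rh ≤ x ∧ x ≤ (rh : ℝ) ^ N + rh)) :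
    rg = rh := by
  have hN' : (N : ℝ) / 10 ≤ N - 2 := by
    have : (11 : ℝ) ≤ N := by exact_mod_cast hN
    linarith
  have key : ∀ a b : ℕ, 1 ≤ a → a < b →
      (a : ℝ) ^ N + a < (b : ℝ) ^ N - (b : ℝ) ^ ((N : ℝ) / 10) - b := fun a b ha hab =>
    pow_add_lt_pow_sub_rpow_sub (Nat.cast_nonneg a) (by exact_mod_cast hab)
      (by exact_mod_cast (show 2 ≤ b by omega)) (by omega) hN'
  obtain ⟨x, ⟨hg₁, hg₂⟩, hh₁, hh₂⟩ := hmeet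
  rcases lt_trichotomy rg rh with hlt | heq | hgt
  · linarith [key rg rh hg hlt]
  · exact heq
  · linarith [key rh rg hh hgt]
end

section
/- Let G be a finitely generated group of exponential growth with finite generating set S, i.e., there exists α > 1 with β_{G,S}(r) ≥ α^r for all r ∈ ℕ, where β_{G,S}(r) = |B_r^{G,S}(e)|. Fix N > 10 and define Z̄_r := { g ∈ G : r^N − r^{N/10} < d_S(e, g) ≤ r^N }. Then |Z̄_r| ≥ α^{r^{N/10}/2} for all sufficiently large r. -/
set_option maxHeartbeats 1000000

/-- The word length of `g` with respect to the generating set `S`. -/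
noncomputable def wlen {G : Type*} [Group G] (S : Set G) (g : G) : ℕ :=
  sInf {n | ∃ l : List G, (∀ x ∈ l, x ∈ S ∨ x⁻¹ ∈ S) ∧ l.length = n ∧ l.prod = g}

namespace Stmt18Aux

variable {G : Type*} [Group G]

theorem exists_word {S : Set G} (hS : Subgroup.closure S = ⊤) (g : G) :
    ∃ l : List G, (∀ x ∈ l, x ∈ S ∨ x⁻¹ ∈ S) ∧ l.prod = g := by
  have hg : g ∈ Subgroup.closure S := by rw [hS]; trivial
  induction hg using Subgroup.closure_induction with
  | mem x hx => exact ⟨[x], by simp [hx], by simp⟩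
  | one => exact ⟨[], by simp, by simp⟩
  | mul x y hx hy ihx ihy =>
    obtain ⟨l1, h1, h1p⟩ := ihx
    obtain ⟨l2, h2, h2p⟩ := ihy
    refine ⟨l1 ++ l2, ?_, by simp [h1p, h2p]⟩
    intro z hz
    rcases List.mem_append.mp hz with h | h
    · exact h1 z h
    · exact h2 z h
  | inv x hx ihx =>
    obtain ⟨l, h1, h1p⟩ := ihx
    refine ⟨(l.map fun y => y⁻¹).reverse, ?_, ?_⟩
    · intro z hz
      simp only [List.mem_reverse, List.mem_map] at hz
      obtain ⟨y, hy, rfl⟩ := hz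
      rcases h1 y hy with h | h
      · exact Or.inr (by simpa using h)
      · exact Or.inl h
    · rw [← List.prod_inv_reverse, h1p]

theorem wlen_spec {S : Set G} (hS : Subgroup.closure S = ⊤) (g : G) :
    ∃ l : List G, (∀ x ∈ l, x ∈ S ∨ x⁻¹ ∈ S) ∧ l.length = wlen S g ∧ l.prod = g := by
  have hne : {n | ∃ l : List G,
      (∀ x ∈ l, x ∈ S ∨ x⁻¹ ∈ S) ∧ l.length = n ∧ l.prod = g}.Nonempty := by
    obtain ⟨l, h1, h2⟩ := exists_word hS g
    exact ⟨l.length, l, h1, rfl, h2⟩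
  exact Nat.sInf_mem hne

theorem wlen_le {S : Set G} {g : G} {l : List G}
    (h1 : ∀ x ∈ l, x ∈ S ∨ x⁻¹ ∈ S) (h2 : l.prod = g) : wlen S g ≤ l.length :=
  Nat.sInf_le ⟨l, h1, rfl, h2⟩

theorem wlen_one (S : Set G) : wlen S 1 = 0 := by
  have := wlen_le (S := S) (g := (1 : G)) (l := []) (by simp) (by simp)
  simpa using this

theorem wlen_mul_le {S : Set G} (hS : Subgroup.closure S = ⊤) (g h : G) :
    wlen S (g * h) ≤ wlen S g + wlen S h := by
  obtain ⟨l1, ha, hb, hc⟩ := wlen_spec hS g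
  obtain ⟨l2, hd, he, hf⟩ := wlen_spec hS h
  have := wlen_le (g := g * h) (l := l1 ++ l2)
    (fun x hx => (List.mem_append.mp hx).elim (ha x) (hd x))
    (by simp [hc, hf])
  simpa [hb, he] using this

theorem wlen_inv_le {S : Set G} (hS : Subgroup.closure S = ⊤) (g : G) :
    wlen S g⁻¹ ≤ wlen S g := by
  obtain ⟨l, h1, h2, h3⟩ := wlen_spec hS g
  have := wlen_le (g := g⁻¹) (l := (l.map fun y => y⁻¹).reverse)
    (by
      intro z hz
      simp only [List.mem_reverse, List.mem_map] at hz
      obtain ⟨y, hy, rfl⟩ := hz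
      rcases h1 y hy with h | h
      · exact Or.inr (by simpa using h)
      · exact Or.inl h)
    (by rw [← List.prod_inv_reverse, h3])
  simpa [h2] using this

theorem wlen_inv {S : Set G} (hS : Subgroup.closure S = ⊤) (g : G) :
    wlen S g⁻¹ = wlen S g :=
  le_antisymm (wlen_inv_le hS g) (by simpa using wlen_inv_le hS g⁻¹)

theorem eq_one_of_wlen_eq_zero {S : Set G} (hS : Subgroup.closure S = ⊤) {g : G}
    (h : wlen S g = 0) : g = 1 := by
  obtain ⟨l, _, hlen, hprod⟩ := wlen_spec hS g
  rw [h, List.length_eq_zero_iff] at hlen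
  rw [hlen] at hprod
  simpa using hprod.symm

theorem wlen_split {S : Set G} (hS : Subgroup.closure S = ⊤) {g : G} {j : ℕ}
    (hj : j ≤ wlen S g) :
    ∃ y z : G, g = y * z ∧ wlen S y = j ∧ wlen S z = wlen S g - j := by
  obtain ⟨l, h1, h2, h3⟩ := wlen_spec hS g
  set y := (l.take j).prod with hy
  set z := (l.drop j).prod with hz
  have hg : g = y * z := by
    rw [hy, hz, ← List.prod_append, List.take_append_drop, h3]
  have hylen : (l.take j).length = j := by
    rw [List.length_take]; omega
  have hzlen : (l.drop j).length = wlen S g - j := by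
    rw [List.length_drop]; omega
  have hwy : wlen S y ≤ j := by
    have := wlen_le (fun x hx => h1 x (List.take_subset j l hx)) hy.symm
    omega
  have hwz : wlen S z ≤ wlen S g - j := by
    have := wlen_le (fun x hx => h1 x (List.drop_subset j l hx)) hz.symm
    omega
  have hsum : wlen S g ≤ wlen S y + wlen S z := by
    rw [hg]; exact wlen_mul_le hS y z
  exact ⟨y, z, hg, by omega, by omega⟩

/-! ### Counting -/

variable [DecidableEq G]

def alph (S : Finset G) : Finset G := insert 1 (S ∪ S.image fun x => x⁻¹)

theorem one_le_alph_card (S : Finset G) : 1 ≤ (alph S).card :=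
  Finset.card_pos.mpr ⟨1, by simp [alph]⟩

theorem mem_alph_of {S : Finset G} {x : G} (h : x ∈ (S : Set G) ∨ x⁻¹ ∈ (S : Set G)) :
    x ∈ alph S := by
  rcases h with h | h
  · simp only [alph, Finset.mem_insert, Finset.mem_union]
    exact Or.inr (Or.inl h)
  · simp only [alph, Finset.mem_insert, Finset.mem_union, Finset.mem_image]
    exact Or.inr (Or.inr ⟨x⁻¹, h, by simp⟩)

theorem ncard_le_of_subset_finset {A : Set G} {F : Finset G} (h : A ⊆ ↑F) :
    A.Finite ∧ A.ncard ≤ F.card := by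
  have hfin : A.Finite := F.finite_toSet.subset h
  refine ⟨hfin, ?_⟩
  have := Set.ncard_le_ncard h F.finite_toSet
  simpa using this

def ball (S : Finset G) (n : ℕ) : Set G := {x : G | wlen (S : Set G) x ≤ n}

theorem ball_mono (S : Finset G) {m n : ℕ} (h : m ≤ n) : ball S m ⊆ ball S n :=
  fun _ hx => le_trans hx h

theorem ball_fc {S : Finset G} (hS : Subgroup.closure (S : Set G) = ⊤) :
    ∀ n, (ball S n).Finite ∧ (ball S n).ncard ≤ (alph S).card ^ n := by
  intro n
  induction n with
  | zero =>
    have hball : ball S 0 = {(1 : G)} := by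
      ext x
      simp only [ball, Set.mem_setOf_eq, Set.mem_singleton_iff]
      constructor
      · intro hx; exact eq_one_of_wlen_eq_zero hS (Nat.le_zero.mp hx)
      · rintro rfl; simp [wlen_one]
    rw [hball]
    exact ⟨Set.finite_singleton 1, by simp⟩
  | succ n ih =>
    obtain ⟨hfin, hcard⟩ := ih
    have hsub : ball S (n + 1) ⊆
        ↑((alph S).biUnion fun s => hfin.toFinset.image fun y => s * y) := by
      intro x hx
      have hx' : wlen (S : Set G) x ≤ n + 1 := hx
      obtain ⟨l, h1, h2, h3⟩ := wlen_spec hS x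
      rw [Finset.mem_coe, Finset.mem_biUnion]
      match l, h1, h2, h3 with
      | [], h1, h2, h3 =>
        refine ⟨1, by simp [alph], ?_⟩
        rw [Finset.mem_image]
        refine ⟨x, ?_, by simp⟩
        rw [Set.Finite.mem_toFinset]
        show wlen (S : Set G) x ≤ n
        simp only [List.length_nil] at h2
        omega
      | a :: t, h1, h2, h3 =>
        refine ⟨a, mem_alph_of (h1 a (by simp)), ?_⟩
        rw [Finset.mem_image]
        refine ⟨t.prod, ?_, by rw [← List.prod_cons, h3]⟩
        rw [Set.Finite.mem_toFinset]
        show wlen (S : Set G) t.prod ≤ n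
        have := wlen_le (fun x hx => h1 x (List.mem_cons_of_mem a hx)) rfl
        simp only [List.length_cons] at h2
        omega
    obtain ⟨hfin', hcard'⟩ := ncard_le_of_subset_finset hsub
    refine ⟨hfin', le_trans hcard' ?_⟩
    calc ((alph S).biUnion fun s => hfin.toFinset.image fun y => s * y).card
        ≤ ∑ s ∈ alph S, (hfin.toFinset.image fun y => s * y).card :=
          Finset.card_biUnion_le
      _ ≤ ∑ _s ∈ alph S, hfin.toFinset.card :=
          Finset.sum_le_sum fun s _ => Finset.card_image_le
      _ = (alph S).card * hfin.toFinset.card := by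
          rw [Finset.sum_const, smul_eq_mul]
      _ ≤ (alph S).card * (alph S).card ^ n := by
          refine Nat.mul_le_mul_left _ ?_
          rw [← Set.ncard_eq_toFinset_card (ball S n) hfin]
          exact hcard
      _ = (alph S).card ^ (n + 1) := by ring

theorem sph_finite {S : Finset G} (hS : Subgroup.closure (S : Set G) = ⊤) (a : ℕ) :
    ({x : G | wlen (S : Set G) x = a}).Finite :=
  (ball_fc hS a).1.subset fun _ hx => le_of_eq hx

theorem sep_exists {S : Finset G} (hS : Subgroup.closure (S : Set G) = ⊤)
    {α : ℝ} (hα : 1 < α)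
    (hgrowth : ∀ r : ℕ, α ^ r ≤ (({g : G | wlen (S : Set G) g ≤ r}).ncard : ℝ))
    (a c m : ℕ) (ha : 1 ≤ a) (hm : 2 ≤ m)
    (hbig : ((2 * ((m - 1) * (alph S).card ^ (2 * c) + 1) * (alph S).card : ℕ) : ℝ) ≤ α ^ a) :
    ∃ T : Finset G, T.card = m ∧ (∀ t ∈ T, wlen (S : Set G) t = a) ∧
      (∀ t ∈ T, ∀ u ∈ T, t ≠ u → 2 * c < wlen (S : Set G) (t⁻¹ * u)) := by
  set Cn := (alph S).card with hCndef
  have hCn : 1 ≤ Cn := one_le_alph_card S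
  set q : ℕ := (m - 1) * Cn ^ (2 * c) + 1 with hqdef
  have hq1 : 1 ≤ q := Nat.succ_le_succ (Nat.zero_le _)
  have key : ∀ j : ℕ,
      (∃ T : Finset G, (∀ t ∈ T, wlen (S : Set G) t = a) ∧
        (∀ t ∈ T, ∀ u ∈ T, t ≠ u → 2 * c < wlen (S : Set G) (t⁻¹ * u)) ∧ T.card = j) ∨
      (∃ T : Finset G, T.card < j ∧ (∀ t ∈ T, wlen (S : Set G) t = a) ∧
        ∀ x : G, wlen (S : Set G) x = a → ∃ t ∈ T, wlen (S : Set G) (t⁻¹ * x) ≤ 2 * c) := by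
    intro j
    induction j with
    | zero => exact Or.inl ⟨∅, by simp, by simp, rfl⟩
    | succ j ihj =>
      rcases ihj with ⟨T, hT1, hT2, hT3⟩ | ⟨T, hT1, hT2, hT3⟩
      · by_cases hcov : ∀ x : G, wlen (S : Set G) x = a →
            ∃ t ∈ T, wlen (S : Set G) (t⁻¹ * x) ≤ 2 * c
        · exact Or.inr ⟨T, by omega, hT1, hcov⟩
          
        · push_neg at hcov
          obtain ⟨x, hxa, hx⟩ := hcov
          have hxT : x ∉ T := by
            intro hmem
            have := hx x hmem
            simp [wlen_one] at this
          refine Or.inl ⟨insert x T, ?_, ?_, by rw [Finset.card_insert_of_notMem hxT, hT3]⟩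
          · intro t ht
            rcases Finset.mem_insert.mp ht with rfl | ht
            · exact hxa
            · exact hT1 t ht
          · intro t ht u hu hne
            rcases Finset.mem_insert.mp ht with h_t | h_t
            · rcases Finset.mem_insert.mp hu with h_u | h_u
              · exact absurd (h_t.trans h_u.symm) hne
              · have h1 := hx u h_u
                have h2 : wlen (S : Set G) (t⁻¹ * u) = wlen (S : Set G) (u⁻¹ * x) := by
                  rw [h_t, ← wlen_inv hS (u⁻¹ * x)]
                  congr 1
                  simp [mul_inv_rev]
                omega
            · rcases Finset.mem_insert.mp hu with h_u | h_u
              · have h1 := hx t h_t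
                rw [h_u]
                exact h1
              · exact hT2 t h_t u h_u hne
      · exact Or.inr ⟨T, by omega, hT2, hT3⟩
  rcases key m with ⟨T, h1, h2, h3⟩ | ⟨T, hTcard, hTa, hcov⟩
  · exact ⟨T, h3, h1, h2⟩
  exfalso
  set B2 := (ball_fc hS (2 * c)).1.toFinset with hB2
  have hB2card : B2.card ≤ Cn ^ (2 * c) := by
    rw [hB2, ← Set.ncard_eq_toFinset_card (ball S (2 * c)) (ball_fc hS (2 * c)).1]
    exact (ball_fc hS (2 * c)).2
  set SphF := (sph_finite hS a).toFinset with hSphF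
  have hSphcard : SphF.card ≤ (m - 1) * Cn ^ (2 * c) := by
    have hsub : SphF ⊆ T.biUnion fun t => B2.image fun y => t * y := by
      intro x hxm
      have hx : wlen (S : Set G) x = a := by
        rw [hSphF, Set.Finite.mem_toFinset] at hxm
        exact hxm
      obtain ⟨t, htT, hle⟩ := hcov x hx
      rw [Finset.mem_biUnion]
      refine ⟨t, htT, ?_⟩
      rw [Finset.mem_image]
      refine ⟨t⁻¹ * x, ?_, by simp⟩
      rw [hB2, Set.Finite.mem_toFinset]
      exact hle
    calc SphF.card ≤ (T.biUnion fun t => B2.image fun y => t * y).card :=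
          Finset.card_le_card hsub
      _ ≤ ∑ t ∈ T, (B2.image fun y => t * y).card := Finset.card_biUnion_le
      _ ≤ ∑ _t ∈ T, B2.card := Finset.sum_le_sum fun t _ => Finset.card_image_le
      _ = T.card * B2.card := by rw [Finset.sum_const, smul_eq_mul]
      _ ≤ (m - 1) * Cn ^ (2 * c) := Nat.mul_le_mul (by omega) hB2card
  have hD : ∀ j : ℕ, (ball S (j * a + (a - 1))).ncard ≤ q ^ j * Cn ^ (a - 1) := by
    intro j
    induction j with
    | zero => simpa using (ball_fc hS (a - 1)).2
    | succ j ihj =>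
      set Bp := (ball_fc hS (j * a + (a - 1))).1.toFinset with hBp
      have hBpcard : Bp.card = (ball S (j * a + (a - 1))).ncard :=
        (Set.ncard_eq_toFinset_card _ _).symm
      have hsub : ball S ((j + 1) * a + (a - 1)) ⊆
          ↑(Bp ∪ SphF.biUnion fun y => Bp.image fun z => y * z) := by
        intro x hx
        have hx' : wlen (S : Set G) x ≤ (j + 1) * a + (a - 1) := hx
        rw [Finset.mem_coe, Finset.mem_union]
        by_cases hxs : wlen (S : Set G) x ≤ j * a + (a - 1)
        · left
          rw [hBp, Set.Finite.mem_toFinset]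
          exact hxs
        · right
          have hexp : (j + 1) * a = j * a + a := by ring
          have haw : a ≤ wlen (S : Set G) x := by omega
          obtain ⟨y, z, hxyz, hy, hz⟩ := wlen_split hS haw
          rw [Finset.mem_biUnion]
          refine ⟨y, ?_, ?_⟩
          · rw [hSphF, Set.Finite.mem_toFinset]
            exact hy
          · rw [Finset.mem_image]
            refine ⟨z, ?_, hxyz.symm⟩
            rw [hBp, Set.Finite.mem_toFinset]
            show wlen (S : Set G) z ≤ j * a + (a - 1)
            omega
      obtain ⟨_, hcard'⟩ := ncard_le_of_subset_finset hsub
      refine le_trans hcard' ?_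
      calc (Bp ∪ SphF.biUnion fun y => Bp.image fun z => y * z).card
          ≤ Bp.card + (SphF.biUnion fun y => Bp.image fun z => y * z).card :=
            Finset.card_union_le _ _
        _ ≤ Bp.card + ∑ y ∈ SphF, (Bp.image fun z => y * z).card :=
            Nat.add_le_add_left Finset.card_biUnion_le _
        _ ≤ Bp.card + ∑ _y ∈ SphF, Bp.card :=
            Nat.add_le_add_left (Finset.sum_le_sum fun y _ => Finset.card_image_le) _
        _ = (1 + SphF.card) * Bp.card := by rw [Finset.sum_const, smul_eq_mul]; ring
        _ ≤ q * (q ^ j * Cn ^ (a - 1)) := by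
            refine Nat.mul_le_mul ?_ ?_
            · omega
            · rw [hBpcard]; exact ihj
        _ = q ^ (j + 1) * Cn ^ (a - 1) := by ring
  -- final contradiction
  have hgr : α ^ (a * a) ≤ ((ball S (a * a)).ncard : ℝ) := hgrowth (a * a)
  have hmono : (ball S (a * a)).ncard ≤ (ball S (a * a + (a - 1))).ncard :=
    Set.ncard_le_ncard (ball_mono S (Nat.le_add_right _ _)) (ball_fc hS _).1
  have hD' : (ball S (a * a + (a - 1))).ncard ≤ q ^ a * Cn ^ (a - 1) := hD a
  have hX1 : 1 ≤ q ^ a * Cn ^ (a - 1) :=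
    Nat.one_le_iff_ne_zero.mpr (by positivity)
  have hnat : q ^ a * Cn ^ (a - 1) * 2 ≤ (2 * q * Cn) ^ a := by
    have e1 : Cn ^ (a - 1) ≤ Cn ^ a := Nat.pow_le_pow_right (by omega) (by omega)
    have e2 : 2 ≤ 2 ^ a := by
      calc 2 = 2 ^ 1 := by norm_num
        _ ≤ 2 ^ a := Nat.pow_le_pow_right (by norm_num) ha
    calc q ^ a * Cn ^ (a - 1) * 2 ≤ q ^ a * Cn ^ a * 2 ^ a := by
          exact Nat.mul_le_mul (Nat.mul_le_mul_left _ e1) e2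
      _ = (2 * q * Cn) ^ a := by rw [mul_pow, mul_pow]; ring
  have hup : ((q ^ a * Cn ^ (a - 1) : ℕ) : ℝ) * 2 ≤ α ^ (a * a) := by
    have h1 : (((2 * q * Cn) ^ a : ℕ) : ℝ) ≤ (α ^ a) ^ a := by
      rw [Nat.cast_pow]
      exact pow_le_pow_left₀ (Nat.cast_nonneg _) hbig a
    have h2 : (α ^ a) ^ a = α ^ (a * a) := (pow_mul α a a).symm
    have h3 : ((q ^ a * Cn ^ (a - 1) : ℕ) : ℝ) * 2 ≤ (((2 * q * Cn) ^ a : ℕ) : ℝ) := by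
      exact_mod_cast hnat
    linarith
  have hdown : α ^ (a * a) ≤ ((q ^ a * Cn ^ (a - 1) : ℕ) : ℝ) := by
    refine le_trans hgr ?_
    exact_mod_cast le_trans hmono hD'
  have hXpos : (1 : ℝ) ≤ ((q ^ a * Cn ^ (a - 1) : ℕ) : ℝ) := by exact_mod_cast hX1
  linarith

end Stmt18Aux

open Stmt18Aux in
/-- For a group of exponential growth (`β(r) ≥ α^r` with `α > 1`) and `N > 10`,
the annulus `Z̄_r = {g | r^N − r^{N/10} < d_S(e,g) ≤ r^N}` satisfies
`|Z̄_r| ≥ α^{r^{N/10}/2}` for all sufficiently large `r`. -/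
theorem stmt_18 {G : Type*} [Group G] (S : Finset G)
    (hS : Subgroup.closure (S : Set G) = ⊤)
    (α : ℝ) (hα : 1 < α)
    (hgrowth : ∀ r : ℕ, α ^ r ≤
      (({g : G | wlen (S : Set G) g ≤ r}).ncard : ℝ))
    (N : ℕ) (hN : 10 < N) :
    ∃ r₀ : ℕ, ∀ r : ℕ, r₀ ≤ r →
      α ^ ((r : ℝ) ^ ((N : ℝ) / 10) / 2) ≤
        (({g : G |
            (r : ℝ) ^ N - (r : ℝ) ^ ((N : ℝ) / 10) < (wlen (S : Set G) g : ℝ) ∧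
            (wlen (S : Set G) g : ℝ) ≤ (r : ℝ) ^ N}).ncard : ℝ) := by
  classical
  have hα0 : (0 : ℝ) < α := lt_trans one_pos hα
  have hCn : 1 ≤ (alph S).card := one_le_alph_card S
  set Cn := (alph S).card with hCndef
  set m : ℕ := ⌈α⌉₊ + 1 with hmdef
  have hm2 : 2 ≤ m := by
    have : 1 ≤ ⌈α⌉₊ := Nat.one_le_ceil_iff.mpr hα0
    omega
  have hαm : α ≤ (m : ℝ) := by
    refine le_trans (Nat.le_ceil α) ?_
    exact_mod_cast Nat.le_succ _
  set K : ℕ := 2 * m * Cn with hKdef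
  have hK1 : 1 ≤ K := by
    calc 1 = 2 * 2 * 1 - 3 := by norm_num
      _ ≤ 2 * m * Cn := by
        have : 2 * 2 * 1 ≤ 2 * m * Cn :=
          Nat.mul_le_mul (Nat.mul_le_mul_left 2 hm2) hCn
        omega
  have hKR1 : (1 : ℝ) ≤ (K : ℝ) := by exact_mod_cast hK1
  have hlogα : 0 < Real.log α := Real.log_pos hα
  have hlogK : 0 ≤ Real.log K := Real.log_nonneg hKR1
  refine ⟨max 2 (⌈2 * Real.log K / Real.log α⌉₊ + 1), fun r hr => ?_⟩
  have hr2 : 2 ≤ r := le_trans (le_max_left _ _) hr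
  have hx2 : (2 : ℝ) ≤ (r : ℝ) := by exact_mod_cast hr2
  have hx1 : (1 : ℝ) ≤ (r : ℝ) := by linarith
  have hx0 : (0 : ℝ) < (r : ℝ) := by linarith
  have hxlog : 2 * Real.log K / Real.log α + 1 ≤ (r : ℝ) := by
    have h1 : (⌈2 * Real.log K / Real.log α⌉₊ + 1 : ℕ) ≤ r :=
      le_trans (le_max_right _ _) hr
    have h2 : 2 * Real.log K / Real.log α ≤ (⌈2 * Real.log K / Real.log α⌉₊ : ℝ) :=
      Nat.le_ceil _
    have h3 : ((⌈2 * Real.log K / Real.log α⌉₊ + 1 : ℕ) : ℝ) ≤ (r : ℝ) := by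
      exact_mod_cast h1
    push_cast at h3
    linarith
  set ν : ℝ := (N : ℝ) / 10 with hνdef
  set kR : ℝ := (r : ℝ) ^ ν with hkRdef
  have hN11 : (11 : ℝ) ≤ (N : ℝ) := by exact_mod_cast (by omega : 11 ≤ N)
  have hν1 : 1 ≤ ν := by rw [hνdef]; linarith
  have hkRx : (r : ℝ) ≤ kR := by
    calc (r : ℝ) = (r : ℝ) ^ (1 : ℝ) := (Real.rpow_one _).symm
      _ ≤ kR := Real.rpow_le_rpow_of_exponent_le hx1 hν1
  have hkR2 : 2 ≤ kR := le_trans hx2 hkRx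
  have hkR0 : 0 < kR := by linarith
  set M : ℕ := r ^ N with hMdef
  have hMcastN : ((M : ℕ) : ℝ) = (r : ℝ) ^ N := by rw [hMdef]; push_cast; ring
  have hMrpow : ((M : ℕ) : ℝ) = (r : ℝ) ^ ((N : ℝ)) := by
    rw [hMcastN, Real.rpow_natCast]
  have hMk : kR * (r : ℝ) ≤ (M : ℝ) := by
    have hsplit : (r : ℝ) ^ ((N : ℝ)) = kR * (r : ℝ) ^ ((N : ℝ) - ν) := by
      rw [hkRdef, ← Real.rpow_add hx0]
      ring_nf
    have hge : (r : ℝ) ≤ (r : ℝ) ^ ((N : ℝ) - ν) := by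
      calc (r : ℝ) = (r : ℝ) ^ (1 : ℝ) := (Real.rpow_one _).symm
        _ ≤ (r : ℝ) ^ ((N : ℝ) - ν) := by
            refine Real.rpow_le_rpow_of_exponent_le hx1 ?_
            rw [hνdef]; linarith
    calc kR * (r : ℝ) ≤ kR * (r : ℝ) ^ ((N : ℝ) - ν) := by nlinarith
      _ = (M : ℝ) := by rw [← hsplit, ← hMrpow]
  have h2kM : 2 * kR ≤ (M : ℝ) := by nlinarith
  set cc : ℕ := ⌈kR / 2⌉₊ with hccdef
  have hcc1 : 1 ≤ cc := by
    rw [hccdef]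
    exact Nat.one_le_ceil_iff.mpr (by linarith)
  set c : ℕ := cc - 1 with hcdef
  have hc1 : (c : ℝ) + 1 = (cc : ℝ) := by
    have : c + 1 = cc := by omega
    exact_mod_cast this
  have hcup : (cc : ℝ) < kR / 2 + 1 := by
    rw [hccdef]
    exact Nat.ceil_lt_add_one (by positivity)
  have hclow : kR / 2 ≤ (cc : ℝ) := by rw [hccdef]; exact Nat.le_ceil _
  have h2c : 2 * (c : ℝ) < kR := by linarith
  have hckR : (c : ℝ) + 1 ≤ kR := by linarith
  have hcM : c ≤ M := by
    have : (c : ℝ) ≤ (M : ℝ) := by linarith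
    exact_mod_cast this
  set a : ℕ := M - c with hadef
  have hacast : (a : ℝ) = (M : ℝ) - (c : ℝ) := Nat.cast_sub hcM
  have haM : (M : ℝ) - kR ≤ (a : ℝ) := by rw [hacast]; linarith
  have ha1 : 1 ≤ a := by
    have : (1 : ℝ) ≤ (a : ℝ) := by linarith
    exact_mod_cast this
  have haac : a + c = M := by omega
  -- the key size hypothesis for `sep_exists`
  set q : ℕ := (m - 1) * Cn ^ (2 * c) + 1 with hqdef
  have hnat1 : 2 * q * Cn ≤ K ^ (2 * c + 2) := by
    have h1 : 1 ≤ Cn ^ (2 * c) := Nat.one_le_pow _ _ (by omega)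
    have hqm : q ≤ m * Cn ^ (2 * c) := by
      calc q = (m - 1) * Cn ^ (2 * c) + 1 := rfl
        _ ≤ (m - 1) * Cn ^ (2 * c) + Cn ^ (2 * c) := by omega
        _ = ((m - 1) + 1) * Cn ^ (2 * c) := by ring
        _ = m * Cn ^ (2 * c) := by rw [Nat.sub_add_cancel (by omega : 1 ≤ m)]
    calc 2 * q * Cn ≤ 2 * (m * Cn ^ (2 * c)) * Cn :=
          Nat.mul_le_mul_right _ (Nat.mul_le_mul_left _ hqm)
      _ = (2 * m) * Cn ^ (2 * c + 1) := by ring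
      _ ≤ (2 * m) ^ (2 * c + 2) * Cn ^ (2 * c + 2) := by
          refine Nat.mul_le_mul ?_ ?_
          · exact Nat.le_self_pow (by omega) _
          · exact Nat.pow_le_pow_right (by omega) (by omega)
      _ = K ^ (2 * c + 2) := (mul_pow (2 * m) Cn (2 * c + 2)).symm
  have hbigR : ((2 * q * Cn : ℕ) : ℝ) ≤ α ^ a := by
    have s1 : ((2 * q * Cn : ℕ) : ℝ) ≤ ((K : ℝ)) ^ (2 * c + 2) := by
      calc ((2 * q * Cn : ℕ) : ℝ) ≤ ((K ^ (2 * c + 2) : ℕ) : ℝ) := by exact_mod_cast hnat1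
        _ = ((K : ℝ)) ^ (2 * c + 2) := by push_cast; ring
    have s2 : ((K : ℝ)) ^ (2 * c + 2) = (K : ℝ) ^ (((2 * c + 2 : ℕ)) : ℝ) :=
      (Real.rpow_natCast _ _).symm
    have s3 : (K : ℝ) ^ (((2 * c + 2 : ℕ)) : ℝ) ≤ (K : ℝ) ^ (2 * kR) := by
      refine Real.rpow_le_rpow_of_exponent_le hKR1 ?_
      push_cast
      linarith
    have s4 : (K : ℝ) ^ (2 * kR) ≤ α ^ ((M : ℝ) - kR) := by
      rw [Real.rpow_def_of_pos (by linarith : (0 : ℝ) < (K : ℝ)),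
        Real.rpow_def_of_pos hα0]
      refine Real.exp_le_exp.mpr ?_
      have hMk' : kR * ((r : ℝ) - 1) ≤ (M : ℝ) - kR := by nlinarith
      have hxr : 2 * Real.log K ≤ Real.log α * ((r : ℝ) - 1) := by
        have h5 : 2 * Real.log K / Real.log α ≤ (r : ℝ) - 1 := by linarith
        calc 2 * Real.log K = (2 * Real.log K / Real.log α) * Real.log α := by
              field_simp
          _ ≤ ((r : ℝ) - 1) * Real.log α := by
              exact mul_le_mul_of_nonneg_right h5 (le_of_lt hlogα)
          _ = Real.log α * ((r : ℝ) - 1) := by ring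
      calc Real.log (K : ℝ) * (2 * kR) = kR * (2 * Real.log (K : ℝ)) := by ring
        _ ≤ kR * (Real.log α * ((r : ℝ) - 1)) :=
            mul_le_mul_of_nonneg_left hxr (le_of_lt hkR0)
        _ = Real.log α * (kR * ((r : ℝ) - 1)) := by ring
        _ ≤ Real.log α * ((M : ℝ) - kR) :=
            mul_le_mul_of_nonneg_left hMk' (le_of_lt hlogα)
    have s5 : α ^ ((M : ℝ) - kR) ≤ α ^ ((a : ℕ) : ℝ) :=
      Real.rpow_le_rpow_of_exponent_le (le_of_lt hα) haM
    have s6 : α ^ ((a : ℕ) : ℝ) = α ^ a := Real.rpow_natCast _ _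
    calc ((2 * q * Cn : ℕ) : ℝ) ≤ ((K : ℝ)) ^ (2 * c + 2) := s1
      _ = (K : ℝ) ^ (((2 * c + 2 : ℕ)) : ℝ) := s2
      _ ≤ (K : ℝ) ^ (2 * kR) := s3
      _ ≤ α ^ ((M : ℝ) - kR) := s4
      _ ≤ α ^ ((a : ℕ) : ℝ) := s5
      _ = α ^ a := s6
  obtain ⟨T, hTcard, hTa, hTsep⟩ := sep_exists hS hα hgrowth a c m ha1 hm2 hbigR
  -- the union of the `m` disjoint translated balls sits inside the annulus
  set BcF := (ball_fc hS c).1.toFinset with hBcF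
  have hBcFcard : BcF.card = (ball S c).ncard := by
    rw [hBcF]
    exact (Set.ncard_eq_toFinset_card _ _).symm
  set U : Finset G := T.biUnion (fun t => BcF.image fun y => t * y) with hUdef
  have hUcard : U.card = m * (ball S c).ncard := by
    rw [hUdef, Finset.card_biUnion]
    · rw [Finset.sum_congr rfl fun t _ =>
        Finset.card_image_of_injective BcF (mul_right_injective t)]
      rw [Finset.sum_const, smul_eq_mul, hTcard, hBcFcard]
    · intro t ht u hu hne
      rw [Function.onFun, Finset.disjoint_left]
      intro z hz1 hz2
      obtain ⟨y1, hy1, hzy1⟩ := Finset.mem_image.mp hz1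
      obtain ⟨y2, hy2, hzy2⟩ := Finset.mem_image.mp hz2
      have hw1 : wlen (S : Set G) y1 ≤ c := by
        rw [hBcF, Set.Finite.mem_toFinset] at hy1
        exact hy1
      have hw2 : wlen (S : Set G) y2 ≤ c := by
        rw [hBcF, Set.Finite.mem_toFinset] at hy2
        exact hy2
      have heq : t * y1 = u * y2 := by rw [hzy1, hzy2]
      have ht' : t⁻¹ * u = y1 * y2⁻¹ := by
        have h1 : t⁻¹ * (t * y1) * y2⁻¹ = t⁻¹ * (u * y2) * y2⁻¹ := by rw [heq]
        simpa [mul_assoc] using h1.symm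
      have hle2c : wlen (S : Set G) (t⁻¹ * u) ≤ 2 * c := by
        rw [ht']
        calc wlen (S : Set G) (y1 * y2⁻¹) ≤
            wlen (S : Set G) y1 + wlen (S : Set G) y2⁻¹ := wlen_mul_le hS _ _
          _ ≤ c + c := add_le_add hw1 (by rw [wlen_inv hS]; exact hw2)
          _ = 2 * c := by ring
      exact absurd hle2c (not_le.mpr (hTsep t ht u hu hne))
  have hUsub : (↑U : Set G) ⊆ {g : G |
      (r : ℝ) ^ N - kR < (wlen (S : Set G) g : ℝ) ∧
      (wlen (S : Set G) g : ℝ) ≤ (r : ℝ) ^ N} := by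
    intro z hz
    rw [Finset.mem_coe, hUdef, Finset.mem_biUnion] at hz
    obtain ⟨t, htT, hz⟩ := hz
    obtain ⟨y, hyB, rfl⟩ := Finset.mem_image.mp hz
    have hya : wlen (S : Set G) t = a := hTa t htT
    have hwy : wlen (S : Set G) y ≤ c := by
      rw [hBcF, Set.Finite.mem_toFinset] at hyB
      exact hyB
    have hup : wlen (S : Set G) (t * y) ≤ M := by
      calc wlen (S : Set G) (t * y) ≤
          wlen (S : Set G) t + wlen (S : Set G) y := wlen_mul_le hS _ _
        _ ≤ a + c := by omega
        _ = M := haac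
    have hlo : a ≤ wlen (S : Set G) (t * y) + c := by
      have h1 : wlen (S : Set G) t ≤
          wlen (S : Set G) (t * y) + wlen (S : Set G) y⁻¹ := by
        have := wlen_mul_le hS (t * y) y⁻¹
        simpa [mul_assoc] using this
      rw [wlen_inv hS] at h1
      omega
    constructor
    · show (r : ℝ) ^ N - kR < (wlen (S : Set G) (t * y) : ℝ)
      have h1 : (a : ℝ) - (c : ℝ) ≤ (wlen (S : Set G) (t * y) : ℝ) := by
        have : (a : ℝ) ≤ (wlen (S : Set G) (t * y) : ℝ) + (c : ℝ) := by
          exact_mod_cast hlo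
        linarith
      rw [hacast] at h1
      rw [← hMcastN]
      linarith
    · show (wlen (S : Set G) (t * y) : ℝ) ≤ (r : ℝ) ^ N
      rw [← hMcastN]
      exact_mod_cast hup
  have hAfin : ({g : G |
      (r : ℝ) ^ N - kR < (wlen (S : Set G) g : ℝ) ∧
      (wlen (S : Set G) g : ℝ) ≤ (r : ℝ) ^ N}).Finite := by
    refine (ball_fc hS M).1.subset ?_
    intro g hg
    have h2 := hg.2
    rw [← hMcastN] at h2
    show wlen (S : Set G) g ≤ M
    exact_mod_cast h2
  have hcount : ((m * (ball S c).ncard : ℕ) : ℝ) ≤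
      (({g : G | (r : ℝ) ^ N - kR < (wlen (S : Set G) g : ℝ) ∧
        (wlen (S : Set G) g : ℝ) ≤ (r : ℝ) ^ N}).ncard : ℝ) := by
    have := Set.ncard_le_ncard hUsub hAfin
    rw [Set.ncard_coe_finset, hUcard] at this
    exact_mod_cast this
  have hβc : α ^ c ≤ ((ball S c).ncard : ℝ) := hgrowth c
  have hαc0 : (0 : ℝ) ≤ α ^ c := le_of_lt (pow_pos hα0 c)
  calc α ^ (kR / 2) ≤ α ^ ((c : ℝ) + 1) :=
        Real.rpow_le_rpow_of_exponent_le (le_of_lt hα) (by linarith)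
    _ = α ^ (((c + 1 : ℕ)) : ℝ) := by push_cast; ring_nf
    _ = α ^ (c + 1) := Real.rpow_natCast _ _
    _ = α ^ c * α := pow_succ α c
    _ ≤ ((ball S c).ncard : ℝ) * (m : ℝ) :=
        mul_le_mul hβc hαm (le_of_lt hα0) (Nat.cast_nonneg _)
    _ = ((m * (ball S c).ncard : ℕ) : ℝ) := by push_cast; ring
    _ ≤ _ := hcount
end
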